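/- Let λ and β be positive random variables on a probability space (Ω, 𝓕, ℙ) satisfying 𝔼[(β/λ^{1/β}) ((β+1)/β)^{(β+1)/β}] < ∞. If ℙ(β < 1) > 0, then the mixed Kies density f(t) = 𝔼[h(t; λ, β)] tends to +∞ as t → 0+. -/

import Mathlib

/-!
For `t ≤ 1/2` and `β ≤ 1 - ε` the Kies density is at least `λ β e^{-λ} t^{-ε}`, and
`{β < 1}` has positive mass, hence so has `{β ≤ 1 - ε}` for some `ε > 0`; integrating over
that set bounds `f t` below by a positive multiple of `t^{-ε}`. The integral defining `f t` is
not the junk value `0` because `e^{-x} ≤ a^a x^{-a}` with `a = (β + 1)/β` dominates the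
density by `t^{-2}` times the integrand of the moment condition.
-/

open MeasureTheory Filter Set Real Topology

noncomputable def kiesDensity (l b t : ℝ) : ℝ :=
  l * b * t ^ (b - 1) * (1 - t) ^ (-(b + 1)) * exp (-l * (t / (1 - t)) ^ b)

noncomputable def kiesMajorant (l b : ℝ) : ℝ :=
  b / l ^ (1 / b) * ((b + 1) / b) ^ ((b + 1) / b)

lemma exp_neg_le_rpow_mul_rpow_neg {x a : ℝ} (hx : 0 < x) (ha : 0 < a) :
    exp (-x) ≤ a ^ a * x ^ (-a) := by
  have h_base : x * exp (-(x / a)) ≤ a := by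
    have := mul_exp_neg_le_exp_neg_one (x / a)
    have : exp (-1) ≤ 1 := exp_le_one_iff.2 (by norm_num)
    calc x * exp (-(x / a)) = a * (x / a * exp (-(x / a))) := by field_simp
      _ ≤ a * 1 := by gcongr; linarith
      _ = a := mul_one a
  have h_pow : (x * exp (-(x / a))) ^ a = x ^ a * exp (-x) := by
    rw [mul_rpow hx.le (exp_pos _).le, ← exp_mul]
    field_simp
  have h_bound : x ^ a * exp (-x) ≤ a ^ a :=
    h_pow ▸ rpow_le_rpow (by positivity) h_base ha.le
  rw [rpow_neg hx.le, ← div_eq_mul_inv, le_div_iff₀ (by positivity)]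
  linarith

lemma kiesDensity_nonneg {l b t : ℝ} (hl : 0 ≤ l) (hb : 0 ≤ b) (ht : 0 ≤ t)
    (ht1 : t ≤ 1) : 0 ≤ kiesDensity l b t := by
  have : 0 ≤ 1 - t := by linarith
  unfold kiesDensity
  positivity

lemma kiesDensity_le {l b t : ℝ} (hl : 0 < l) (hb : 0 < b) (ht : 0 < t) (ht1 : t < 1) :
    kiesDensity l b t ≤ t ^ (-2 : ℝ) * kiesMajorant l b := by
  set a := (b + 1) / b
  have h1t : 0 < 1 - t := by linarith
  set s := t / (1 - t)
  have hs : 0 < s := by positivity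
  have h_exp := exp_neg_le_rpow_mul_rpow_neg (x := l * s ^ b) (by positivity)
    (show 0 < a by positivity)
  have h_ab : b * -a = -(b + 1) := by simp only [a]; field_simp
  have h_s : (l * s ^ b) ^ (-a) = l ^ (-a) * (t ^ (-(b + 1)) / (1 - t) ^ (-(b + 1))) := by
    rw [mul_rpow hl.le (by positivity), ← rpow_mul hs.le, h_ab, div_rpow ht.le h1t.le]
  have h_l : l * l ^ (-a) = (l ^ (1 / b))⁻¹ := by
    nth_rw 1 [← rpow_one l]
    rw [← rpow_neg hl.le, ← rpow_add hl]
    congr 1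
    simp only [a]; field_simp; ring
  have h_t : t ^ (b - 1) * t ^ (-(b + 1)) = t ^ (-2 : ℝ) := by
    rw [← rpow_add ht]; ring_nf
  have h_1t : (1 - t) ^ (-(b + 1)) ≠ 0 := (rpow_pos_of_pos h1t _).ne'
  calc kiesDensity l b t
      ≤ l * b * t ^ (b - 1) * (1 - t) ^ (-(b + 1)) * (a ^ a * (l * s ^ b) ^ (-a)) := by
        unfold kiesDensity; rw [neg_mul]; gcongr
    _ = (l * l ^ (-a)) * b * (t ^ (b - 1) * t ^ (-(b + 1))) * a ^ a := by
        rw [h_s]; field_simp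
    _ = t ^ (-2 : ℝ) * kiesMajorant l b := by rw [h_l, h_t, kiesMajorant]; ring

lemma mul_rpow_neg_le_kiesDensity {l b t ε : ℝ} (hl : 0 < l) (hb : 0 ≤ b) (hbε : b ≤ 1 - ε)
    (ht : 0 < t) (ht2 : t ≤ 1 / 2) :
    l * b * exp (-l) * t ^ (-ε) ≤ kiesDensity l b t := by
  have h1t : 0 < 1 - t := by linarith
  have h_pow : t ^ (-ε) ≤ t ^ (b - 1) :=
    rpow_le_rpow_of_exponent_ge ht (by linarith) (by linarith)
  have h_one : 1 ≤ (1 - t) ^ (-(b + 1)) :=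
    one_le_rpow_of_pos_of_le_one_of_nonpos h1t (by linarith) (by linarith)
  have h_exp : exp (-l) ≤ exp (-l * (t / (1 - t)) ^ b) := by
    have : (t / (1 - t)) ^ b ≤ 1 :=
      rpow_le_one (by positivity) (by rw [div_le_one h1t]; linarith) hb
    gcongr
    nlinarith
  calc l * b * exp (-l) * t ^ (-ε) = l * b * t ^ (-ε) * 1 * exp (-l) := by ring
    _ ≤ kiesDensity l b t := by unfold kiesDensity; gcongr

section

variable {Ω : Type*} [MeasurableSpace Ω] {μ : Measure Ω} {lam beta : Ω → ℝ}

lemma measurable_kiesDensity (hlam : Measurable lam) (hbeta : Measurable beta) (t : ℝ) :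
    Measurable fun ω => kiesDensity (lam ω) (beta ω) t := by
  unfold kiesDensity
  fun_prop

lemma exists_pos_measure_le_sub {g : Ω → ℝ} {c : ℝ} (h : 0 < μ {ω | g ω < c}) :
    ∃ ε > 0, 0 < μ {ω | g ω ≤ c - ε} := by
  have h_cover : {ω | g ω < c} ⊆ ⋃ n : ℕ, {ω | g ω ≤ c - 1 / (n + 1)} := by
    intro ω hω
    obtain ⟨n, hn⟩ := exists_nat_one_div_lt (sub_pos.2 (show g ω < c from hω))
    exact mem_iUnion.2 ⟨n, show g ω ≤ c - 1 / (n + 1) by linarith⟩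
  have : μ (⋃ n : ℕ, {ω | g ω ≤ c - 1 / (n + 1)}) ≠ 0 :=
    (h.trans_le (measure_mono h_cover)).ne'
  obtain ⟨n, hn⟩ := exists_measure_pos_of_not_measure_iUnion_null this
  exact ⟨1 / (n + 1), by positivity, hn⟩

lemma integrable_kiesDensity (hlam : Measurable lam) (hbeta : Measurable beta)
    (hlam_pos : ∀ ω, 0 < lam ω) (hbeta_pos : ∀ ω, 0 < beta ω)
    (h_int : Integrable (fun ω => kiesMajorant (lam ω) (beta ω)) μ)
    {t : ℝ} (ht : 0 < t) (ht1 : t < 1) :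
    Integrable (fun ω => kiesDensity (lam ω) (beta ω) t) μ := by
  refine (h_int.const_mul (t ^ (-2 : ℝ))).mono'
    (measurable_kiesDensity hlam hbeta t).aestronglyMeasurable (ae_of_all _ fun ω => ?_)
  rw [norm_of_nonneg (kiesDensity_nonneg (hlam_pos ω).le (hbeta_pos ω).le ht.le ht1.le)]
  exact kiesDensity_le (hlam_pos ω) (hbeta_pos ω) ht ht1

lemma setIntegral_mul_mul_exp_neg_pos [IsFiniteMeasure μ] (hlam : Measurable lam)
    (hbeta : Measurable beta) (hlam_pos : ∀ ω, 0 < lam ω) (hbeta_pos : ∀ ω, 0 < beta ω)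
    {S : Set Ω} (hS : MeasurableSet S) (hμS : 0 < μ S) (hbeta_le : ∀ ω ∈ S, beta ω ≤ 1) :
    0 < ∫ ω in S, lam ω * beta ω * exp (-lam ω) ∂μ := by
  have h_pos : ∀ ω, 0 < lam ω * beta ω * exp (-lam ω) := fun ω => by
    have := hlam_pos ω; have := hbeta_pos ω; positivity
  have h_le_one : ∀ ω ∈ S, lam ω * beta ω * exp (-lam ω) ≤ 1 := fun ω hω => by
    have := mul_exp_neg_le_exp_neg_one (lam ω)
    have : exp (-1) ≤ 1 := exp_le_one_iff.2 (by norm_num)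
    nlinarith [hbeta_le ω hω, hbeta_pos ω]
  have h_int : IntegrableOn (fun ω => lam ω * beta ω * exp (-lam ω)) S μ :=
    Integrable.of_bound (by fun_prop) 1 <| (ae_restrict_iff' hS).2 <| ae_of_all _ fun ω hω => by
      rw [norm_of_nonneg (h_pos ω).le]; exact h_le_one ω hω
  rw [setIntegral_pos_iff_support_of_nonneg_ae (ae_of_all _ fun ω => (h_pos ω).le) h_int,
    Function.support_eq_univ fun ω => (h_pos ω).ne', univ_inter]
  exact hμS

lemma eventually_setIntegral_mul_rpow_neg_le_integral_kiesDensity (hlam : Measurable lam)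
    (hbeta : Measurable beta) (hlam_pos : ∀ ω, 0 < lam ω) (hbeta_pos : ∀ ω, 0 < beta ω)
    (h_int : Integrable (fun ω => kiesMajorant (lam ω) (beta ω)) μ)
    {ε : ℝ} {S : Set Ω} (hS : MeasurableSet S) (hbeta_le : ∀ ω ∈ S, beta ω ≤ 1 - ε) :
    ∀ᶠ t in 𝓝[>] 0, (∫ ω in S, lam ω * beta ω * exp (-lam ω) ∂μ) * t ^ (-ε) ≤
      ∫ ω, kiesDensity (lam ω) (beta ω) t ∂μ := by
  filter_upwards [Ioo_mem_nhdsGT (show (0 : ℝ) < 1 / 2 by norm_num)] with t ⟨ht, ht2⟩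
  have h_nonneg : ∀ ω, 0 ≤ kiesDensity (lam ω) (beta ω) t := fun ω =>
    kiesDensity_nonneg (hlam_pos ω).le (hbeta_pos ω).le ht.le (by linarith)
  have h_kies := integrable_kiesDensity hlam hbeta hlam_pos hbeta_pos h_int ht (by linarith)
  calc (∫ ω in S, lam ω * beta ω * exp (-lam ω) ∂μ) * t ^ (-ε)
      = ∫ ω in S, lam ω * beta ω * exp (-lam ω) * t ^ (-ε) ∂μ :=
        (integral_mul_const _ _).symm
    _ ≤ ∫ ω in S, kiesDensity (lam ω) (beta ω) t ∂μ := by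
        refine integral_mono_of_nonneg (ae_of_all _ fun ω => ?_) h_kies.integrableOn
          ((ae_restrict_iff' hS).2 (ae_of_all _ fun ω hω => ?_))
        · have := hlam_pos ω; have := hbeta_pos ω; positivity
        · exact mul_rpow_neg_le_kiesDensity (hlam_pos ω) (hbeta_pos ω).le (hbeta_le ω hω)
            ht ht2.le
    _ ≤ ∫ ω, kiesDensity (lam ω) (beta ω) t ∂μ :=
        setIntegral_le_integral h_kies (ae_of_all _ h_nonneg)

end

theorem mixed_kies_density_left_endpoint_beta_lt_one
    {Ω : Type*} [MeasurableSpace Ω] (μ : Measure Ω) [IsProbabilityMeasure μ]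
    (lam beta : Ω → ℝ) (hlam_meas : Measurable lam) (hbeta_meas : Measurable beta)
    (hlam_pos : ∀ ω, 0 < lam ω) (hbeta_pos : ∀ ω, 0 < beta ω)
    (hcond1 : Integrable (fun ω =>
        beta ω / lam ω ^ (1 / beta ω) *
          ((beta ω + 1) / beta ω) ^ ((beta ω + 1) / beta ω)) μ)
    (hbeta_lt : 0 < μ {ω | beta ω < 1})
    (f : ℝ → ℝ)
    (hf : ∀ t, f t = ∫ ω, lam ω * beta ω * t ^ (beta ω - 1) * (1 - t) ^ (-(beta ω + 1)) *
        Real.exp (-(lam ω) * (t / (1 - t)) ^ (beta ω)) ∂μ) :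
    Tendsto f (nhdsWithin 0 (Set.Ioi 0)) atTop := by
  obtain ⟨ε, hε, hμS⟩ := exists_pos_measure_le_sub hbeta_lt
  have hS : MeasurableSet {ω | beta ω ≤ 1 - ε} := measurableSet_le hbeta_meas measurable_const
  have h_const := setIntegral_mul_mul_exp_neg_pos hlam_meas hbeta_meas hlam_pos hbeta_pos hS hμS
    fun ω (hω : beta ω ≤ 1 - ε) => by linarith
  have h_lower := eventually_setIntegral_mul_rpow_neg_le_integral_kiesDensity hlam_meas
    hbeta_meas hlam_pos hbeta_pos hcond1 hS fun _ hω => hω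
  refine tendsto_atTop_mono' _ ?_
    ((tendsto_rpow_neg_nhdsGT_zero (neg_neg_of_pos hε)).const_mul_atTop h_const)
  filter_upwards [h_lower] with t ht
  rwa [hf]
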